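/- arXiv:2605.05051 — 4 statements merged into one kernel-verified Lean document; each statement's English description precedes it below -/
import Mathlib

section
/- Let K be any one of the overlap classes P_SI^ov, P_SI^(r) for some r ∈ (0,∞), or P_SI^str, and let ψ_n : D^n → [0,1] be any measurable (possibly randomized) test applied to n i.i.d. full-data observations. Then sup_{P ∈ K} E_P[ψ_n] = sup_{P ∈ P_SI} E_P[ψ_n]. -/
/-!
STATEMENT 0 (no-free-lunch for conditional independence testing, finite sample):
If a (possibly randomized) test `ψ : D^n → [0,1]` on the full data
`(X, Y(1), Y(0), T)` has level `α` over the strong-ignorability class `P_SI`,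
then it has level `α` over the whole class `E`.
-/

open MeasureTheory ProbabilityTheory Filter

noncomputable section

/-- The full-data sample space `D = ℝ^p × ℝ² × {0,1}`. -/
abbrev FullData (p : ℕ) : Type := (Fin p → ℝ) × ℝ × ℝ × Bool

/-- Covariate coordinate. -/
def Xc {p : ℕ} (ω : FullData p) : Fin p → ℝ := ω.1

/-- Treated potential outcome coordinate `Y(1)`. -/
def Y1c {p : ℕ} (ω : FullData p) : ℝ := ω.2.1

/-- Control potential outcome coordinate `Y(0)`. -/
def Y0c {p : ℕ} (ω : FullData p) : ℝ := ω.2.2.1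

/-- Treatment coordinate `T`. -/
def Tc {p : ℕ} (ω : FullData p) : Bool := ω.2.2.2

lemma measurable_Xc {p : ℕ} : Measurable (Xc (p := p)) := measurable_fst

/-- The σ-algebra generated by the covariates `X`. -/
def mX (p : ℕ) : MeasurableSpace (FullData p) :=
  MeasurableSpace.comap Xc inferInstance

lemma mX_le (p : ℕ) : mX p ≤ (inferInstance : MeasurableSpace (FullData p)) := measurable_Xc.comap_le

/-- The class `E`: distributions of `(X, Y(1), Y(0), T)` such that at least one coordinate
of `X` has a law absolutely continuous w.r.t. Lebesgue measure, and the laws of `Y(1)` and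
`Y(0)` are atomless (continuous). -/
def memE {p : ℕ} (P : ProbabilityMeasure (FullData p)) : Prop :=
  (∃ j : Fin p,
    ((P : Measure (FullData p)).map (fun ω => Xc ω j)).AbsolutelyContinuous
      (volume : Measure ℝ)) ∧
  (∀ y : ℝ, ((P : Measure (FullData p)).map Y1c) {y} = 0) ∧
  (∀ y : ℝ, ((P : Measure (FullData p)).map Y0c) {y} = 0)

/-- The strong-ignorability class `P_SI ⊆ E`: `(Y(1), Y(0)) ⫫ T | X`. -/
def memPSI {p : ℕ} (P : ProbabilityMeasure (FullData p)) : Prop :=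
  memE P ∧
    CondIndepFun (mX p) (mX_le p) (fun ω => (Y1c ω, Y0c ω)) Tc
      (P : Measure (FullData p))


/-- The observed-data sample space: one observed unit is `(X, T, Y)`. -/
abbrev Obs (p : ℕ) : Type := (Fin p → ℝ) × Bool × ℝ

/-- The observed data of a unit: `(X, T, Y)` with `Y = T·Y(1) + (1 - T)·Y(0)`. -/
def obs {p : ℕ} (ω : FullData p) : Obs p :=
  (ω.1, ω.2.2.2, if ω.2.2.2 then ω.2.1 else ω.2.2.1)

/-- Joint law of `n + 1` i.i.d. full-data observations from `P`
(the first `n` units are the study sample, the last one is the test unit). -/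
def jointLaw {p : ℕ} (n : ℕ) (P : ProbabilityMeasure (FullData p)) :
    Measure (Fin (n + 1) → FullData p) :=
  Measure.pi fun _ : Fin (n + 1) => (P : Measure (FullData p))

/-- The observed data `O_n` extracted from `n + 1` full-data points. -/
def obsData {p : ℕ} (n : ℕ) (ω : Fin (n + 1) → FullData p) : Fin n → Obs p :=
  fun i => obs (ω i.castSucc)

/-- Covariates `X` of the test unit. -/
def testX {p : ℕ} (n : ℕ) (ω : Fin (n + 1) → FullData p) : Fin p → ℝ :=
  Xc (ω (Fin.last n))

/-- Individual treatment effect `Δ = Y(1) - Y(0)` of the test unit. -/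
def testITE {p : ℕ} (n : ℕ) (ω : Fin (n + 1) → FullData p) : ℝ :=
  Y1c (ω (Fin.last n)) - Y0c (ω (Fin.last n))


/-- The propensity score `e_P(X) := P(T = 1 | X)`, realized as the conditional expectation of
the indicator of `{T = 1}` given the σ-algebra generated by `X`. -/
def propensity {p : ℕ} (P : ProbabilityMeasure (FullData p)) : FullData p → ℝ :=
  MeasureTheory.condExp (mX p) (P : Measure (FullData p))
    (fun ω => if Tc ω = true then (1 : ℝ) else 0)

/-- The overlap class `P_SI^ov`: strong ignorability and `0 < e_P(X) < 1` a.s. -/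
def memPov {p : ℕ} (P : ProbabilityMeasure (FullData p)) : Prop :=
  memPSI P ∧
    ∀ᵐ ω ∂(P : Measure (FullData p)), propensity P ω ∈ Set.Ioo (0 : ℝ) 1

/-- The overlap class `P_SI^(r)`: strong ignorability and
`E_P[e_P(X)^{-r} (1 - e_P(X))^{-r}] < ∞`. -/
def memPr {p : ℕ} (r : ℝ) (P : ProbabilityMeasure (FullData p)) : Prop :=
  memPSI P ∧
    ∫⁻ ω, ENNReal.ofReal
        ((propensity P ω) ^ (-r) * (1 - propensity P ω) ^ (-r))
      ∂(P : Measure (FullData p)) < ⊤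

/-- The strong-overlap class `P_SI^str`: strong ignorability and
`e_P(X) ∈ [c_P, 1 - c_P]` a.s. for some constant `c_P > 0` (depending on `P`). -/
def memPstr {p : ℕ} (P : ProbabilityMeasure (FullData p)) : Prop :=
  memPSI P ∧
    ∃ c : ℝ, 0 < c ∧
      ∀ᵐ ω ∂(P : Measure (FullData p)), propensity P ω ∈ Set.Icc c (1 - c)

/-- Expected value `E_P[ψ_n]` of a test `ψ_n : D^n → [0,1]` when the `n` data points are
i.i.d. with law `P`. -/
def testExp {p : ℕ} (n : ℕ) (ψ : (Fin n → FullData p) → ℝ)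
    (P : ProbabilityMeasure (FullData p)) : ℝ :=
  ∫ x, ψ x ∂(Measure.pi fun _ : Fin n => (P : Measure (FullData p)))

namespace NFL

open MeasureTheory ProbabilityTheory Filter Set

variable {p : ℕ}

lemma measurable_Tc : Measurable (Tc (p := p)) := measurable_snd.comp (measurable_snd.comp measurable_snd)
lemma measurable_Y1c : Measurable (Y1c (p := p)) := measurable_fst.comp measurable_snd
lemma measurable_Y0c : Measurable (Y0c (p := p)) := measurable_fst.comp (measurable_snd.comp measurable_snd)

/-- Replace the treatment coordinate by `b`. -/
def setT (b : Bool) : FullData p → FullData p := fun ω => (ω.1, ω.2.1, ω.2.2.1, b)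

lemma measurable_setT (b : Bool) : Measurable (setT (p := p) b) :=
  measurable_fst.prodMk <| (measurable_fst.comp measurable_snd).prodMk <|
    ((measurable_fst.comp (measurable_snd.comp measurable_snd)).prodMk measurable_const)

lemma Xc_setT (b : Bool) (ω : FullData p) : Xc (setT b ω) = Xc ω := rfl
lemma Y1c_setT (b : Bool) (ω : FullData p) : Y1c (setT b ω) = Y1c ω := rfl
lemma Y0c_setT (b : Bool) (ω : FullData p) : Y0c (setT b ω) = Y0c ω := rfl
lemma Tc_setT (b : Bool) (ω : FullData p) : Tc (setT b ω) = b := rfl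

lemma preimage_setT {A : Set (FullData p)} (hA : MeasurableSet[mX p] A) (b : Bool) :
    setT b ⁻¹' A = A := by
  obtain ⟨s, _, rfl⟩ := hA
  rfl

/-- The perturbed measure: with prob `1-δ` keep the point, with prob `δ` rerandomize `T`. -/
def mixM (δ : ℝ) (P : Measure (FullData p)) : Measure (FullData p) :=
  ENNReal.ofReal (1 - δ) • P + ENNReal.ofReal (δ/2) • P.map (setT true)
    + ENNReal.ofReal (δ/2) • P.map (setT false)

lemma coef_sum {δ : ℝ} (h0 : 0 ≤ δ) (h1 : δ ≤ 1) :
    ENNReal.ofReal (1 - δ) + ENNReal.ofReal (δ/2) + ENNReal.ofReal (δ/2) = 1 := by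
  rw [← ENNReal.ofReal_add (by linarith) (by linarith),
    ← ENNReal.ofReal_add (by linarith) (by linarith)]
  norm_num
  ring

lemma mixM_apply {δ : ℝ} (P : Measure (FullData p)) {A : Set (FullData p)}
    (hA : MeasurableSet A) :
    mixM δ P A = ENNReal.ofReal (1 - δ) * P A + ENNReal.ofReal (δ/2) * P (setT true ⁻¹' A)
      + ENNReal.ofReal (δ/2) * P (setT false ⁻¹' A) := by
  simp [mixM, Measure.add_apply, Measure.smul_apply, smul_eq_mul,
    Measure.map_apply (measurable_setT _) hA]

lemma isProbabilityMeasure_mixM {δ : ℝ} (h0 : 0 ≤ δ) (h1 : δ ≤ 1)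
    (P : Measure (FullData p)) [IsProbabilityMeasure P] :
    IsProbabilityMeasure (mixM δ P) := by
  constructor
  rw [mixM_apply P MeasurableSet.univ]
  simp only [Set.preimage_univ, measure_univ, mul_one]
  exact coef_sum h0 h1

lemma map_setT_apply_mX (P : Measure (FullData p)) {A : Set (FullData p)}
    (hA : MeasurableSet[mX p] A) (b : Bool) : P.map (setT b) A = P A := by
  rw [Measure.map_apply (measurable_setT b) (mX_le p A hA), preimage_setT hA]

lemma mixM_apply_mX {δ : ℝ} (h0 : 0 ≤ δ) (h1 : δ ≤ 1) (P : Measure (FullData p))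
    {A : Set (FullData p)} (hA : MeasurableSet[mX p] A) : mixM δ P A = P A := by
  rw [mixM_apply P (mX_le p A hA), preimage_setT hA, preimage_setT hA,
    ← add_mul, ← add_mul, coef_sum h0 h1, one_mul]

lemma trim_map_setT (P : Measure (FullData p)) (b : Bool) :
    (P.map (setT b)).trim (mX_le p) = P.trim (mX_le p) := by
  refine @Measure.ext _ (mX p) _ _ (fun s hs => ?_)
  rw [trim_measurableSet_eq _ hs, trim_measurableSet_eq _ hs, map_setT_apply_mX P hs]

lemma trim_mixM {δ : ℝ} (h0 : 0 ≤ δ) (h1 : δ ≤ 1) (P : Measure (FullData p)) :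
    (mixM δ P).trim (mX_le p) = P.trim (mX_le p) := by
  refine @Measure.ext _ (mX p) _ _ (fun s hs => ?_)
  rw [trim_measurableSet_eq _ hs, trim_measurableSet_eq _ hs, mixM_apply_mX h0 h1 P hs]

/-- Transfer of set integrals of `mX`-measurable functions between measures with equal trim. -/
lemma setIntegral_trim_transfer {μ ν : Measure (FullData p)}
    (h : μ.trim (mX_le p) = ν.trim (mX_le p)) {f : FullData p → ℝ}
    (hf : StronglyMeasurable[mX p] f) {A : Set (FullData p)} (hA : MeasurableSet[mX p] A) :
    ∫ ω in A, f ω ∂μ = ∫ ω in A, f ω ∂ν := by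
  rw [← integral_indicator (mX_le p A hA), ← integral_indicator (mX_le p A hA),
    integral_trim (mX_le p) (hf.indicator hA), integral_trim (mX_le p) (hf.indicator hA), h]

end NFL
namespace NFL2
open MeasureTheory ProbabilityTheory Filter Set NFL

variable {p : ℕ}

lemma integrable_of_bound (μ : Measure (FullData p)) [IsFiniteMeasure μ]
    (f : FullData p → ℝ) (C : ℝ) (hm : AEStronglyMeasurable f μ)
    (h : ∀ᵐ ω ∂μ, |f ω| ≤ C) : Integrable f μ :=
  (integrable_const C).mono' hm (by simpa [Real.norm_eq_abs] using h)

lemma integral_mixM {δ : ℝ} (h0 : 0 ≤ δ) (h1 : δ ≤ 1) (P : Measure (FullData p))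
    [IsProbabilityMeasure P] (f : FullData p → ℝ) (hf : Measurable f) (C : ℝ)
    (hC : ∀ ω, |f ω| ≤ C) :
    ∫ ω, f ω ∂(mixM δ P) = (1 - δ) * ∫ ω, f ω ∂P
      + (δ/2) * ∫ ω, f (setT true ω) ∂P + (δ/2) * ∫ ω, f (setT false ω) ∂P := by
  have hint : ∀ (μ : Measure (FullData p)), IsProbabilityMeasure μ → Integrable f μ := by
    intro μ hμ
    exact integrable_of_bound μ f C hf.aestronglyMeasurable (ae_of_all _ hC)
  have hmapt : IsProbabilityMeasure (P.map (setT true)) :=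
    Measure.isProbabilityMeasure_map (measurable_setT true).aemeasurable
  have hmapf : IsProbabilityMeasure (P.map (setT false)) :=
    Measure.isProbabilityMeasure_map (measurable_setT false).aemeasurable
  have h2 : Integrable f (ENNReal.ofReal (1 - δ) • P + ENNReal.ofReal (δ/2) • P.map (setT true)) := by
    refine Integrable.add_measure ?_ ?_
    · exact ((hint P inferInstance).smul_measure ENNReal.ofReal_ne_top)
    · exact ((hint _ hmapt).smul_measure ENNReal.ofReal_ne_top)
  rw [mixM, integral_add_measure h2 ((hint _ hmapf).smul_measure ENNReal.ofReal_ne_top),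
    integral_add_measure ((hint P inferInstance).smul_measure ENNReal.ofReal_ne_top)
      ((hint _ hmapt).smul_measure ENNReal.ofReal_ne_top),
    integral_smul_measure, integral_smul_measure, integral_smul_measure,
    integral_map (measurable_setT true).aemeasurable hf.aestronglyMeasurable,
    integral_map (measurable_setT false).aemeasurable hf.aestronglyMeasurable,
    ENNReal.toReal_ofReal (by linarith), ENNReal.toReal_ofReal (by linarith)]
  simp only [smul_eq_mul]

lemma setIntegral_mixM {δ : ℝ} (h0 : 0 ≤ δ) (h1 : δ ≤ 1) (P : Measure (FullData p))
    [IsProbabilityMeasure P] (f : FullData p → ℝ) (hf : Measurable f) (C : ℝ)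
    (hC : ∀ ω, |f ω| ≤ C) {A : Set (FullData p)} (hA : MeasurableSet[mX p] A) :
    ∫ ω in A, f ω ∂(mixM δ P) = (1 - δ) * ∫ ω in A, f ω ∂P
      + (δ/2) * ∫ ω in A, f (setT true ω) ∂P + (δ/2) * ∫ ω in A, f (setT false ω) ∂P := by
  have hA' : MeasurableSet A := mX_le p A hA
  have key : ∀ b : Bool, A.indicator (fun ω => f (setT b ω)) = fun ω => (A.indicator f) (setT b ω) := by
    intro b
    funext ω
    have hmem : setT b ω ∈ A ↔ ω ∈ A := by
      constructor <;> intro h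
      · rw [← preimage_setT hA b]; exact h
      · rw [← preimage_setT hA b] at h; exact h
    by_cases hω : ω ∈ A
    · simp [Set.indicator, hω, hmem]
    · simp [Set.indicator, hω, hmem]
  have hind : Measurable (A.indicator f) := hf.indicator hA'
  have hbound : ∀ ω, |A.indicator f ω| ≤ |C| := by
    intro ω
    by_cases hω : ω ∈ A
    · simpa [Set.indicator, hω] using (hC ω).trans (le_abs_self C)
    · simp [Set.indicator, hω]
  rw [← integral_indicator hA', ← integral_indicator hA', ← integral_indicator hA',
    ← integral_indicator hA', integral_mixM h0 h1 P (A.indicator f) hind |C| hbound]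
  rw [key true, key false]

end NFL2
namespace NFL3
open MeasureTheory ProbabilityTheory Filter Set NFL NFL2

variable {p : ℕ}

/-- The indicator of treatment. -/
def fT : FullData p → ℝ := fun ω => if Tc ω = true then (1 : ℝ) else 0

lemma measurable_fT : Measurable (fT (p := p)) := by
  have : fT (p := p) = (Tc ⁻¹' {true}).indicator (fun _ => (1:ℝ)) := by
    funext ω; by_cases h : Tc ω = true <;> simp [fT, Set.indicator, h]
  rw [this]
  exact (measurable_const.indicator (measurable_Tc (MeasurableSet.singleton true)))

lemma fT_bound (ω : FullData p) : |fT ω| ≤ 1 := by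
  by_cases h : Tc ω = true <;> simp [fT, h]

lemma fT_setT_true (ω : FullData p) : fT (setT true ω) = 1 := by simp [fT, Tc_setT]
lemma fT_setT_false (ω : FullData p) : fT (setT false ω) = 0 := by simp [fT, Tc_setT]

/-- Propensity at the measure level. -/
def eC (P : Measure (FullData p)) : FullData p → ℝ :=
  MeasureTheory.condExp (mX p) P fT

lemma eC_sm (P : Measure (FullData p)) : StronglyMeasurable[mX p] (eC (p := p) P) :=
  stronglyMeasurable_condExp

/-- `eC P ∈ [0,1]` outside an `mX`-measurable `P`-null set. -/
lemma eC_bad_set (P : Measure (FullData p)) [IsProbabilityMeasure P] :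
    MeasurableSet[mX p] {ω | ¬ (eC P ω ∈ Set.Icc (0:ℝ) 1)} ∧
      P {ω | ¬ (eC P ω ∈ Set.Icc (0:ℝ) 1)} = 0 := by
  constructor
  · have : {ω | ¬ (eC P ω ∈ Set.Icc (0:ℝ) 1)} = eC P ⁻¹' (Set.Icc (0:ℝ) 1)ᶜ := rfl
    rw [this]
    exact (eC_sm P).measurable measurableSet_Icc.compl
  · have h0 : 0 ≤ᵐ[P] eC P := condExp_nonneg (ae_of_all _ (fun ω => by
      by_cases h : Tc ω = true <;> simp [fT, h]))
    have h1 : eC P ≤ᵐ[P] fun _ => (1:ℝ) := by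
      have := condExp_mono (m := mX p) (μ := P)
        (integrable_of_bound P fT 1 measurable_fT.aestronglyMeasurable (ae_of_all _ fT_bound))
        (integrable_const (1:ℝ))
        (ae_of_all _ (fun ω => by by_cases h : Tc ω = true <;> simp [fT, h]))
      rwa [condExp_const (mX_le p)] at this
    have hae : ∀ᵐ ω ∂P, eC P ω ∈ Set.Icc (0:ℝ) 1 := by
      filter_upwards [h0, h1] with ω hω0 hω1
      exact ⟨hω0, hω1⟩
    exact ae_iff.mp hae

lemma eC_bound_mixM {δ : ℝ} (h0 : 0 ≤ δ) (h1 : δ ≤ 1) (P : Measure (FullData p))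
    [IsProbabilityMeasure P] :
    ∀ᵐ ω ∂(mixM δ P), eC P ω ∈ Set.Icc (0:ℝ) 1 := by
  obtain ⟨hmeas, hnull⟩ := eC_bad_set P
  rw [ae_iff]
  exact (mixM_apply_mX h0 h1 P hmeas).trans hnull

/-- Uniqueness device for conditional expectations under the mixture measure. -/
lemma condexp_mixM_eq {δ : ℝ} (h0 : 0 ≤ δ) (h1 : δ ≤ 1) (P : Measure (FullData p))
    [IsProbabilityMeasure P] (f g : FullData p → ℝ) (hf : Measurable f)
    (hCf : ∀ ω, |f ω| ≤ 1)
    (hg_sm : StronglyMeasurable[mX p] g) (C : ℝ) (hg_bd : ∀ᵐ ω ∂(mixM δ P), |g ω| ≤ C)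
    (heq : ∀ A : Set (FullData p), MeasurableSet[mX p] A →
      ∫ ω in A, g ω ∂P = (1 - δ) * ∫ ω in A, f ω ∂P
        + (δ/2) * ∫ ω in A, f (setT true ω) ∂P + (δ/2) * ∫ ω in A, f (setT false ω) ∂P) :
    g =ᵐ[mixM δ P] MeasureTheory.condExp (mX p) (mixM δ P) f := by
  haveI : IsProbabilityMeasure (mixM δ P) := isProbabilityMeasure_mixM h0 h1 P
  have hg_int : Integrable g (mixM δ P) :=
    integrable_of_bound _ g C ((hg_sm.mono (mX_le p)).aestronglyMeasurable) hg_bd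
  refine ae_eq_condExp_of_forall_setIntegral_eq (mX_le p)
    (integrable_of_bound _ f 1 hf.aestronglyMeasurable (ae_of_all _ hCf))
    (fun s hs _ => hg_int.integrableOn)
    (fun s hs _ => ?_) hg_sm.aestronglyMeasurable
  rw [setIntegral_trim_transfer (trim_mixM h0 h1 P) hg_sm hs, heq s hs,
    ← setIntegral_mixM h0 h1 P f hf 1 hCf hs]

end NFL3
namespace NFL4
open MeasureTheory ProbabilityTheory Filter Set NFL NFL2 NFL3
open scoped Classical

variable {p : ℕ}

/-- The pair of potential outcomes. -/
def YY : FullData p → ℝ × ℝ := fun ω => (Y1c ω, Y0c ω)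

lemma measurable_YY : Measurable (YY (p := p)) := measurable_Y1c.prodMk measurable_Y0c

lemma indicator_one_icc (S : Set (FullData p)) (ω : FullData p) :
    S.indicator (fun _ => (1:ℝ)) ω ∈ Set.Icc (0:ℝ) 1 := by
  by_cases h : ω ∈ S <;> simp [Set.indicator, h]

lemma indicator_one_bound (S : Set (FullData p)) (ω : FullData p) :
    |S.indicator (fun _ => (1:ℝ)) ω| ≤ 1 := by
  by_cases h : ω ∈ S <;> simp [Set.indicator, h]

lemma condexp_icc_P (P : Measure (FullData p)) [IsProbabilityMeasure P]
    (f : FullData p → ℝ) (hf : Measurable f) (h01 : ∀ ω, f ω ∈ Set.Icc (0:ℝ) 1) :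
    ∀ᵐ ω ∂P, MeasureTheory.condExp (mX p) P f ω ∈ Set.Icc (0:ℝ) 1 := by
  have hfi : Integrable f P := integrable_of_bound P f 1 hf.aestronglyMeasurable
    (ae_of_all _ (fun ω => abs_le.2 ⟨by linarith [(h01 ω).1], (h01 ω).2⟩))
  have h0 : 0 ≤ᵐ[P] MeasureTheory.condExp (mX p) P f :=
    condExp_nonneg (ae_of_all _ (fun ω => (h01 ω).1))
  have h1 : MeasureTheory.condExp (mX p) P f ≤ᵐ[P] fun _ => (1:ℝ) := by
    have := condExp_mono (m := mX p) (μ := P) hfi (integrable_const (1:ℝ))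
      (ae_of_all _ (fun ω => (h01 ω).2))
    rwa [condExp_const (mX_le p)] at this
  filter_upwards [h0, h1] with ω hω0 hω1
  exact ⟨hω0, hω1⟩

lemma condexp_icc_mixM {δ : ℝ} (h0 : 0 ≤ δ) (h1 : δ ≤ 1) (P : Measure (FullData p))
    [IsProbabilityMeasure P] (f : FullData p → ℝ) (hf : Measurable f)
    (h01 : ∀ ω, f ω ∈ Set.Icc (0:ℝ) 1) :
    ∀ᵐ ω ∂(mixM δ P), MeasureTheory.condExp (mX p) P f ω ∈ Set.Icc (0:ℝ) 1 := by
  have hmeas : MeasurableSet[mX p] {ω | ¬ (MeasureTheory.condExp (mX p) P f ω ∈ Set.Icc (0:ℝ) 1)} := by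
    have : {ω | ¬ (MeasureTheory.condExp (mX p) P f ω ∈ Set.Icc (0:ℝ) 1)}
        = MeasureTheory.condExp (mX p) P f ⁻¹' (Set.Icc (0:ℝ) 1)ᶜ := rfl
    rw [this]
    exact (stronglyMeasurable_condExp (m := mX p)).measurable measurableSet_Icc.compl
  rw [ae_iff]
  exact (mixM_apply_mX h0 h1 P hmeas).trans (ae_iff.mp (condexp_icc_P P f hf h01))

section Main

variable {δ : ℝ} (h0 : 0 ≤ δ) (h1 : δ ≤ 1) (P : Measure (FullData p)) [IsProbabilityMeasure P]

/-- Indicator of a treatment-measurable event. -/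
def fB (t : Set Bool) : FullData p → ℝ := (Tc ⁻¹' t).indicator (fun _ => (1:ℝ))

lemma measurable_fB (t : Set Bool) : Measurable (fB (p := p) t) :=
  measurable_const.indicator (measurable_Tc (by trivial))

lemma fB_setT (t : Set Bool) (b : Bool) (ω : FullData p) :
    fB t (setT b ω) = if b ∈ t then (1:ℝ) else 0 := by
  by_cases h : b ∈ t <;> simp [fB, Set.indicator, Tc_setT, h]

lemma fT_eq_fB : fT (p := p) = fB {true} := by
  funext ω; by_cases h : Tc ω = true <;> simp [fT, fB, Set.indicator, h]

/-- Indicator of an outcome event. -/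
def fS (s : Set (ℝ × ℝ)) : FullData p → ℝ := (YY ⁻¹' s).indicator (fun _ => (1:ℝ))

lemma measurable_fS {s : Set (ℝ × ℝ)} (hs : MeasurableSet s) : Measurable (fS (p := p) s) :=
  measurable_const.indicator (measurable_YY hs)

lemma fS_setT (s : Set (ℝ × ℝ)) (b : Bool) (ω : FullData p) : fS s (setT b ω) = fS s ω := by
  have hmem : setT b ω ∈ YY ⁻¹' s ↔ ω ∈ YY ⁻¹' s := Iff.rfl
  by_cases h : ω ∈ YY ⁻¹' s <;> simp [fS, Set.indicator, hmem, h]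

/-- Indicator of the intersection event. -/
def fSB (s : Set (ℝ × ℝ)) (t : Set Bool) : FullData p → ℝ :=
  (YY ⁻¹' s ∩ Tc ⁻¹' t).indicator (fun _ => (1:ℝ))

lemma measurable_fSB {s : Set (ℝ × ℝ)} (hs : MeasurableSet s) (t : Set Bool) :
    Measurable (fSB (p := p) s t) :=
  measurable_const.indicator ((measurable_YY hs).inter (measurable_Tc (by trivial)))

lemma fSB_setT (s : Set (ℝ × ℝ)) (t : Set Bool) (b : Bool) (ω : FullData p) :
    fSB s t (setT b ω) = if b ∈ t then fS s ω else 0 := by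
  have hmem : setT b ω ∈ YY ⁻¹' s ↔ ω ∈ YY ⁻¹' s := Iff.rfl
  by_cases hb : b ∈ t <;> by_cases h : ω ∈ YY ⁻¹' s <;>
    simp [fSB, fS, Set.indicator, Tc_setT, hmem, h, hb]

lemma fSB_eq_mul (s : Set (ℝ × ℝ)) (t : Set Bool) (ω : FullData p) :
    fSB s t ω = fS s ω * fB t ω := by
  by_cases h1 : ω ∈ YY ⁻¹' s <;> by_cases h2 : ω ∈ Tc ⁻¹' t <;>
    simp [fSB, fS, fB, Set.indicator, h1, h2]

/-- The constant `c_t = (δ/2)(1_{true∈t} + 1_{false∈t})`. -/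
def cT (δ : ℝ) (t : Set Bool) : ℝ :=
  (δ/2) * ((if true ∈ t then (1:ℝ) else 0) + (if false ∈ t then (1:ℝ) else 0))

lemma cT_nonneg {δ : ℝ} (hd : 0 ≤ δ) {t : Set Bool} : 0 ≤ cT δ t := by
  unfold cT
  by_cases ht : true ∈ t <;> by_cases hf : false ∈ t <;> simp [ht, hf] <;> linarith

lemma cT_le {δ : ℝ} (hd : 0 ≤ δ) {t : Set Bool} : cT δ t ≤ δ := by
  unfold cT
  by_cases ht : true ∈ t <;> by_cases hf : false ∈ t <;> simp [ht, hf] <;> linarith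

end Main
end NFL4
namespace NFL5
open MeasureTheory ProbabilityTheory Filter Set NFL NFL2 NFL3 NFL4
open scoped Classical

variable {p : ℕ} {δ : ℝ} (P : Measure (FullData p)) [IsProbabilityMeasure P]

lemma integrable_fS {s : Set (ℝ × ℝ)} (hs : MeasurableSet s) : Integrable (fS (p := p) s) P :=
  integrable_of_bound P _ 1 (measurable_fS hs).aestronglyMeasurable
    (ae_of_all _ (indicator_one_bound _))

lemma integrable_fB (t : Set Bool) : Integrable (fB (p := p) t) P :=
  integrable_of_bound P _ 1 (measurable_fB t).aestronglyMeasurable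
    (ae_of_all _ (indicator_one_bound _))

lemma integrable_fSB {s : Set (ℝ × ℝ)} (hs : MeasurableSet s) (t : Set Bool) :
    Integrable (fSB (p := p) s t) P :=
  integrable_of_bound P _ 1 (measurable_fSB hs t).aestronglyMeasurable
    (ae_of_all _ (indicator_one_bound _))

lemma condexp_fS_mixM (h0 : 0 ≤ δ) (h1 : δ ≤ 1) {s : Set (ℝ × ℝ)} (hs : MeasurableSet s) :
    MeasureTheory.condExp (mX p) P (fS s)
      =ᵐ[mixM δ P] MeasureTheory.condExp (mX p) (mixM δ P) (fS s) := by
  refine condexp_mixM_eq h0 h1 P (fS s) _ (measurable_fS hs) (indicator_one_bound _)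
    stronglyMeasurable_condExp 1 ?_ ?_
  · filter_upwards [condexp_icc_mixM h0 h1 P (fS s) (measurable_fS hs) (indicator_one_icc _)]
      with ω hω
    exact abs_le.2 ⟨by linarith [hω.1], hω.2⟩
  · intro A hA
    simp only [fS_setT]
    rw [setIntegral_condExp (mX_le p) (integrable_fS P hs) hA]
    ring

lemma condexp_fB_mixM (h0 : 0 ≤ δ) (h1 : δ ≤ 1) (t : Set Bool) :
    (fun ω => (1 - δ) * MeasureTheory.condExp (mX p) P (fB t) ω + cT δ t)
      =ᵐ[mixM δ P] MeasureTheory.condExp (mX p) (mixM δ P) (fB t) := by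
  refine condexp_mixM_eq h0 h1 P (fB t) _ (measurable_fB t) (indicator_one_bound _)
    ((stronglyMeasurable_const.mul stronglyMeasurable_condExp).add stronglyMeasurable_const)
    1 ?_ ?_
  · filter_upwards [condexp_icc_mixM h0 h1 P (fB t) (measurable_fB t) (indicator_one_icc _)]
      with ω hω
    have hc0 : 0 ≤ cT δ t := cT_nonneg h0
    have hc1 : cT δ t ≤ δ := cT_le h0
    exact abs_le.2 ⟨by nlinarith [hω.1, hω.2], by nlinarith [hω.1, hω.2]⟩
  · intro A hA
    simp only [fB_setT]
    rw [integral_add ((integrable_condExp.const_mul (1 - δ)).integrableOn)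
      ((integrable_const (cT δ t)).integrableOn), integral_const_mul,
      setIntegral_condExp (mX_le p) (integrable_fB P t) hA]
    by_cases ht : true ∈ t <;> by_cases hf : false ∈ t <;>
      simp [ht, hf, setIntegral_const, cT, smul_eq_mul] <;> ring

lemma condexp_fSB_mixM (h0 : 0 ≤ δ) (h1 : δ ≤ 1)
    (hCI : CondIndepFun (mX p) (mX_le p) (YY (p := p)) Tc P)
    {s : Set (ℝ × ℝ)} (hs : MeasurableSet s) (t : Set Bool) :
    (fun ω => MeasureTheory.condExp (mX p) P (fS s) ω *
        ((1 - δ) * MeasureTheory.condExp (mX p) P (fB t) ω + cT δ t))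
      =ᵐ[mixM δ P] MeasureTheory.condExp (mX p) (mixM δ P) (fSB s t) := by
  have hGB := condexp_icc_P P (fS s) (measurable_fS hs) (indicator_one_icc _)
  have hEt := condexp_icc_P P (fB t) (measurable_fB t) (indicator_one_icc _)
  have hGBEt_int : Integrable (fun ω => MeasureTheory.condExp (mX p) P (fS s) ω *
      MeasureTheory.condExp (mX p) P (fB t) ω) P := by
    refine integrable_of_bound P _ 1
      ((stronglyMeasurable_condExp.mono (mX_le p)).mul
        (stronglyMeasurable_condExp.mono (mX_le p))).aestronglyMeasurable ?_
    filter_upwards [hGB, hEt] with ω h1 h2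
    rw [abs_mul]
    exact mul_le_one₀ (abs_le.2 ⟨by linarith [h1.1], h1.2⟩) (abs_nonneg _)
      (abs_le.2 ⟨by linarith [h2.1], h2.2⟩)
  have hprod : MeasureTheory.condExp (mX p) P (fSB s t) =ᵐ[P]
      fun ω => MeasureTheory.condExp (mX p) P (fS s) ω *
        MeasureTheory.condExp (mX p) P (fB t) ω := by
    rw [condIndepFun_iff_condExp_inter_preimage_eq_mul measurable_YY measurable_Tc] at hCI
    exact hCI s t hs (by trivial)
  refine condexp_mixM_eq h0 h1 P (fSB s t) _ (measurable_fSB hs t) (indicator_one_bound _)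
    (stronglyMeasurable_condExp.mul
      ((stronglyMeasurable_const.mul stronglyMeasurable_condExp).add stronglyMeasurable_const))
    1 ?_ ?_
  · have hGBm := condexp_icc_mixM h0 h1 P (fS s) (measurable_fS hs) (indicator_one_icc _)
    have hEtm := condexp_icc_mixM h0 h1 P (fB t) (measurable_fB t) (indicator_one_icc _)
    have hc0 : 0 ≤ cT δ t := cT_nonneg h0
    have hc1 : cT δ t ≤ δ := cT_le h0
    filter_upwards [hGBm, hEtm] with ω h1' h2'
    rw [abs_mul]
    refine mul_le_one₀ (abs_le.2 ⟨by linarith [h1'.1], h1'.2⟩) (abs_nonneg _)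
      (abs_le.2 ⟨by nlinarith [h2'.1, h2'.2], by nlinarith [h2'.1, h2'.2]⟩)
  · intro A hA
    have hsplit : (fun ω => MeasureTheory.condExp (mX p) P (fS s) ω *
        ((1 - δ) * MeasureTheory.condExp (mX p) P (fB t) ω + cT δ t))
        = fun ω => (1 - δ) * (MeasureTheory.condExp (mX p) P (fS s) ω *
            MeasureTheory.condExp (mX p) P (fB t) ω)
          + cT δ t * MeasureTheory.condExp (mX p) P (fS s) ω := by
      funext ω; ring
    rw [hsplit, integral_add ((hGBEt_int.const_mul (1 - δ)).integrableOn)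
      ((integrable_condExp.const_mul (cT δ t)).integrableOn),
      integral_const_mul, integral_const_mul]
    have e1 : ∫ ω in A, MeasureTheory.condExp (mX p) P (fS s) ω *
        MeasureTheory.condExp (mX p) P (fB t) ω ∂P = ∫ ω in A, fSB s t ω ∂P := by
      rw [← setIntegral_condExp (mX_le p) (integrable_fSB P hs t) hA]
      exact integral_congr_ae (ae_restrict_of_ae hprod.symm)
    have e2 : ∫ ω in A, MeasureTheory.condExp (mX p) P (fS s) ω ∂P
        = ∫ ω in A, fS s ω ∂P := setIntegral_condExp (mX_le p) (integrable_fS P hs) hA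
    rw [e1, e2]
    simp only [fSB_setT]
    by_cases ht : true ∈ t <;> by_cases hf : false ∈ t <;>
      simp [ht, hf, cT, smul_eq_mul] <;> ring

lemma condIndepFun_mixM [IsFiniteMeasure (mixM δ P)] (h0 : 0 ≤ δ) (h1 : δ ≤ 1)
    (hCI : CondIndepFun (mX p) (mX_le p) (YY (p := p)) Tc P) :
    CondIndepFun (mX p) (mX_le p) (YY (p := p)) Tc (mixM δ P) := by
  rw [condIndepFun_iff_condExp_inter_preimage_eq_mul (μ := mixM δ P) measurable_YY measurable_Tc]
  intro s t hs ht
  have hA := condexp_fS_mixM P h0 h1 hs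
  have hB := condexp_fB_mixM P h0 h1 t
  have hC := (condexp_fSB_mixM P h0 h1 hCI hs t).symm
  filter_upwards [hA, hB, hC] with ω e1 e2 e3
  show MeasureTheory.condExp (mX p) (mixM δ P) (fSB s t) ω
    = MeasureTheory.condExp (mX p) (mixM δ P) (fS s) ω *
      MeasureTheory.condExp (mX p) (mixM δ P) (fB t) ω
  rw [e3, ← e1, ← e2]

/-- The propensity of the mixture. -/
lemma propensity_mixM_ae (h0 : 0 ≤ δ) (h1 : δ ≤ 1) :
    MeasureTheory.condExp (mX p) (mixM δ P) fT
      =ᵐ[mixM δ P] fun ω => (1 - δ) * eC P ω + δ/2 := by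
  have h := (condexp_fB_mixM P h0 h1 {true}).symm
  have hc : cT δ {true} = δ/2 := by simp [cT]
  have he : MeasureTheory.condExp (mX p) P (fB {true}) = eC P := by
    rw [eC, fT_eq_fB]
  rw [fT_eq_fB]
  filter_upwards [h] with ω hω
  rw [hω, hc, he]

/-- The propensity of the mixture is in `[δ/2, 1-δ/2]` a.e. -/
lemma propensity_mixM_bound (h0 : 0 ≤ δ) (h1 : δ ≤ 1) :
    ∀ᵐ ω ∂(mixM δ P), MeasureTheory.condExp (mX p) (mixM δ P) fT ω
      ∈ Set.Icc (δ/2) (1 - δ/2) := by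
  have hb := condexp_icc_mixM h0 h1 P fT measurable_fT (fun ω => by
    by_cases h : Tc ω = true <;> simp [fT, h])
  filter_upwards [propensity_mixM_ae P h0 h1, hb] with ω h1' h2'
  rw [h1']
  have h2'' : eC P ω ∈ Set.Icc (0:ℝ) 1 := h2'
  constructor
  · show δ/2 ≤ (1 - δ) * eC P ω + δ/2
    nlinarith [h2''.1, h2''.2]
  · show (1 - δ) * eC P ω + δ/2 ≤ 1 - δ/2
    nlinarith [h2''.1, h2''.2]

end NFL5
namespace NFL6
open MeasureTheory ProbabilityTheory Filter Set
open scoped ENNReal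

/-- Monotonicity of product measure. -/
lemma prod_mono {α β : Type*} [MeasurableSpace α] [MeasurableSpace β]
    {μ1 μ2 : Measure α} {ν1 ν2 : Measure β} [SFinite ν1] [SFinite ν2]
    (hμ : μ1 ≤ μ2) (hν : ν1 ≤ ν2) : μ1.prod ν1 ≤ μ2.prod ν2 := by
  refine Measure.le_iff.2 fun s hs => ?_
  rw [Measure.prod_apply hs, Measure.prod_apply hs]
  exact le_trans (lintegral_mono fun x => Measure.le_iff'.1 hν _) (lintegral_mono' hμ le_rfl)

/-- Monotonicity of `n`-fold product measure. -/
lemma pi_mono {α : Type*} [MeasurableSpace α] {μ ν : Measure α}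
    [IsFiniteMeasure μ] [IsFiniteMeasure ν] (h : μ ≤ ν) :
    ∀ n : ℕ, Measure.pi (fun _ : Fin n => μ) ≤ Measure.pi (fun _ : Fin n => ν) := by
  intro n
  induction n with
  | zero => rw [Measure.pi_of_empty, Measure.pi_of_empty]
  | succ n ih =>
    have e := MeasurableEquiv.piFinSuccAbove (fun _ : Fin (n+1) => α) 0
    have h1 := measurePreserving_piFinSuccAbove (fun _ : Fin (n+1) => μ) 0
    have h2 := measurePreserving_piFinSuccAbove (fun _ : Fin (n+1) => ν) 0
    have e1 : Measure.pi (fun _ : Fin (n+1) => μ)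
        = Measure.map (MeasurableEquiv.piFinSuccAbove (fun _ : Fin (n+1) => α) 0).symm
          (μ.prod (Measure.pi (fun _ : Fin n => μ))) := by
      exact ((h1.symm _).map_eq).symm
    have e2 : Measure.pi (fun _ : Fin (n+1) => ν)
        = Measure.map (MeasurableEquiv.piFinSuccAbove (fun _ : Fin (n+1) => α) 0).symm
          (ν.prod (Measure.pi (fun _ : Fin n => ν))) := by
      exact ((h2.symm _).map_eq).symm
    rw [e1, e2]
    refine Measure.le_iff.2 fun s hs => ?_
    rw [Measure.map_apply (MeasurableEquiv.measurable _) hs,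
      Measure.map_apply (MeasurableEquiv.measurable _) hs]
    exact Measure.le_iff.1 (prod_mono h ih) _
      (MeasurableEquiv.measurable _ hs)

/-- Product of a scaled measure. -/
lemma pi_smul {α : Type*} [MeasurableSpace α] {μ : Measure α} [IsFiniteMeasure μ]
    (c : ℝ≥0∞) (hc : c ≠ ⊤) (n : ℕ) :
    Measure.pi (fun _ : Fin n => c • μ) = c ^ n • Measure.pi (fun _ : Fin n => μ) := by
  haveI hfin : IsFiniteMeasure (c • μ) := by
    refine ⟨?_⟩
    rw [Measure.smul_apply, smul_eq_mul]
    exact ENNReal.mul_lt_top hc.lt_top (measure_lt_top μ _)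
  haveI : ∀ i : Fin n, SigmaFinite ((fun _ : Fin n => c • μ) i) := fun _ => inferInstance
  refine Measure.pi_eq (μ := fun _ : Fin n => c • μ) fun s hs => ?_
  rw [Measure.smul_apply, Measure.pi_pi, smul_eq_mul]
  simp only [Measure.smul_apply, smul_eq_mul]
  rw [Finset.prod_mul_distrib, Finset.prod_const]
  congr 1
  simp

end NFL6
namespace NFL7
open MeasureTheory ProbabilityTheory Filter Set NFL NFL2 NFL3 NFL4 NFL5 NFL6
open scoped ENNReal

variable {p : ℕ}

lemma map_mixM {γ : Type*} [MeasurableSpace γ] {δ : ℝ} (h0 : 0 ≤ δ) (h1 : δ ≤ 1)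
    (P : Measure (FullData p)) [IsProbabilityMeasure P] (g : FullData p → γ)
    (hg : Measurable g) (hcomp : ∀ b ω, g (setT b ω) = g ω) :
    (mixM δ P).map g = P.map g := by
  have ht : g ∘ setT true = g := funext (hcomp true)
  have hf : g ∘ setT false = g := funext (hcomp false)
  unfold mixM
  rw [Measure.map_add _ _ hg, Measure.map_add _ _ hg, Measure.map_smul, Measure.map_smul,
    Measure.map_smul, Measure.map_map hg (measurable_setT true),
    Measure.map_map hg (measurable_setT false), ht, hf, ← add_smul, ← add_smul,
    coef_sum h0 h1, one_smul]

/-- The perturbed probability measure. -/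
def mixP {δ : ℝ} (h0 : 0 ≤ δ) (h1 : δ ≤ 1) (P : ProbabilityMeasure (FullData p)) :
    ProbabilityMeasure (FullData p) :=
  ⟨mixM δ (P : Measure (FullData p)), isProbabilityMeasure_mixM h0 h1 _⟩

lemma memPstr_mixP {δ : ℝ} (h0 : 0 < δ) (h1 : δ ≤ 1) (P : ProbabilityMeasure (FullData p))
    (hP : memPSI P) : memPstr (mixP h0.le h1 P) := by
  haveI : IsProbabilityMeasure (mixM δ (P : Measure (FullData p))) :=
    isProbabilityMeasure_mixM h0.le h1 _
  obtain ⟨⟨⟨j, hj⟩, hY1, hY0⟩, hCI⟩ := hP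
  refine ⟨⟨⟨⟨j, ?_⟩, fun y => ?_, fun y => ?_⟩, ?_⟩, ⟨δ/2, by linarith, ?_⟩⟩
  · show ((mixM δ (P : Measure (FullData p))).map (fun ω => Xc ω j)).AbsolutelyContinuous _
    rw [map_mixM (g := fun ω => Xc ω j) h0.le h1 _
      ((measurable_pi_apply j).comp measurable_Xc) (fun b ω => rfl)]
    exact hj
  · show ((mixM δ (P : Measure (FullData p))).map Y1c) {y} = 0
    rw [map_mixM h0.le h1 _ _ measurable_Y1c (fun b ω => rfl)]
    exact hY1 y
  · show ((mixM δ (P : Measure (FullData p))).map Y0c) {y} = 0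
    rw [map_mixM h0.le h1 _ _ measurable_Y0c (fun b ω => rfl)]
    exact hY0 y
  · exact condIndepFun_mixM (P : Measure (FullData p)) h0.le h1 hCI
  · have hb := propensity_mixM_bound (P : Measure (FullData p)) h0.le h1
    exact hb

lemma memPov_of_memPstr (P : ProbabilityMeasure (FullData p)) (h : memPstr P) : memPov P := by
  obtain ⟨hSI, c, hc, hae⟩ := h
  refine ⟨hSI, ?_⟩
  filter_upwards [hae] with ω hω
  exact ⟨lt_of_lt_of_le hc hω.1, lt_of_le_of_lt hω.2 (by linarith)⟩

lemma memPr_of_memPstr (r : ℝ) (hr : 0 < r) (P : ProbabilityMeasure (FullData p))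
    (h : memPstr P) : memPr r P := by
  obtain ⟨hSI, c, hc, hae⟩ := h
  refine ⟨hSI, ?_⟩
  have hb : ∀ᵐ ω ∂(P : Measure (FullData p)),
      ENNReal.ofReal ((propensity P ω) ^ (-r) * (1 - propensity P ω) ^ (-r))
        ≤ ENNReal.ofReal (c ^ (-r) * c ^ (-r)) := by
    filter_upwards [hae] with ω hω
    have h1 : (propensity P ω) ^ (-r) ≤ c ^ (-r) :=
      Real.rpow_le_rpow_of_nonpos hc hω.1 (by linarith)
    have h2 : (1 - propensity P ω) ^ (-r) ≤ c ^ (-r) :=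
      Real.rpow_le_rpow_of_nonpos hc (by linarith [hω.2]) (by linarith)
    refine ENNReal.ofReal_le_ofReal (mul_le_mul h1 h2 ?_ ?_)
    · exact Real.rpow_nonneg (by linarith [hω.2]) _
    · exact Real.rpow_nonneg hc.le _
  refine lt_of_le_of_lt (lintegral_mono_ae hb) ?_
  rw [lintegral_const, measure_univ, mul_one]
  exact ENNReal.ofReal_lt_top

lemma testExp_nonneg (n : ℕ) (ψ : (Fin n → FullData p) → ℝ)
    (hψ_range : ∀ x, ψ x ∈ Set.Icc (0 : ℝ) 1) (P : ProbabilityMeasure (FullData p)) :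
    0 ≤ testExp n ψ P :=
  integral_nonneg fun x => (hψ_range x).1

lemma testExp_le_one (n : ℕ) (ψ : (Fin n → FullData p) → ℝ) (hψ_meas : Measurable ψ)
    (hψ_range : ∀ x, ψ x ∈ Set.Icc (0 : ℝ) 1) (P : ProbabilityMeasure (FullData p)) :
    testExp n ψ P ≤ 1 := by
  haveI : IsProbabilityMeasure (Measure.pi fun _ : Fin n => (P : Measure (FullData p))) :=
    inferInstance
  have hint : Integrable ψ (Measure.pi fun _ : Fin n => (P : Measure (FullData p))) := by
    refine (integrable_const (1:ℝ)).mono' hψ_meas.aestronglyMeasurable (ae_of_all _ fun x => ?_)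
    rw [Real.norm_eq_abs]
    exact abs_le.2 ⟨by linarith [(hψ_range x).1], (hψ_range x).2⟩
  have := integral_mono hint (integrable_const (1:ℝ)) (fun x => (hψ_range x).2)
  simpa [testExp] using this

lemma testExp_mixP_ge {δ : ℝ} (h0 : 0 ≤ δ) (h1 : δ ≤ 1) (n : ℕ)
    (ψ : (Fin n → FullData p) → ℝ) (hψ_meas : Measurable ψ)
    (hψ_range : ∀ x, ψ x ∈ Set.Icc (0 : ℝ) 1) (P : ProbabilityMeasure (FullData p)) :
    (1 - δ) ^ n * testExp n ψ P ≤ testExp n ψ (mixP h0 h1 P) := by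
  set Pm : Measure (FullData p) := (P : Measure (FullData p)) with hPm
  haveI : IsProbabilityMeasure (mixM δ Pm) := isProbabilityMeasure_mixM h0 h1 _
  haveI : IsProbabilityMeasure (Measure.pi fun _ : Fin n => mixM δ Pm) := inferInstance
  set c : ℝ≥0∞ := ENNReal.ofReal (1 - δ) with hc
  haveI hfin : IsFiniteMeasure (c • Pm) := by
    refine ⟨?_⟩
    rw [Measure.smul_apply, smul_eq_mul]
    exact ENNReal.mul_lt_top ENNReal.ofReal_ne_top.lt_top (measure_lt_top _ _)
  have hle : c • Pm ≤ mixM δ Pm := Measure.le_add_right (Measure.le_add_right le_rfl)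
  have hpile : Measure.pi (fun _ : Fin n => c • Pm) ≤ Measure.pi (fun _ : Fin n => mixM δ Pm) :=
    pi_mono hle n
  have hint : Integrable ψ (Measure.pi fun _ : Fin n => mixM δ Pm) := by
    refine (integrable_const (1:ℝ)).mono' hψ_meas.aestronglyMeasurable (ae_of_all _ fun x => ?_)
    rw [Real.norm_eq_abs]
    exact abs_le.2 ⟨by linarith [(hψ_range x).1], (hψ_range x).2⟩
  have step1 : (1 - δ) ^ n * testExp n ψ P
      = ∫ x, ψ x ∂(Measure.pi fun _ : Fin n => c • Pm) := by
    rw [pi_smul c ENNReal.ofReal_ne_top n, integral_smul_measure, testExp]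
    rw [ENNReal.toReal_pow, ENNReal.toReal_ofReal (by linarith)]
    simp [smul_eq_mul]
    exact Or.inl rfl
  have step2 : ∫ x, ψ x ∂(Measure.pi fun _ : Fin n => c • Pm)
      ≤ ∫ x, ψ x ∂(Measure.pi fun _ : Fin n => mixM δ Pm) :=
    integral_mono_measure hpile (ae_of_all _ fun x => (hψ_range x).1) hint
  rw [step1]
  exact step2

lemma approx (n : ℕ) (ψ : (Fin n → FullData p) → ℝ) (hψ_meas : Measurable ψ)
    (hψ_range : ∀ x, ψ x ∈ Set.Icc (0 : ℝ) 1) (P : ProbabilityMeasure (FullData p))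
    (hP : memPSI P) {δ : ℝ} (h0 : 0 < δ) (h1 : δ ≤ 1) :
    ∃ Q : ProbabilityMeasure (FullData p), memPstr Q ∧
      (1 - δ) ^ n * testExp n ψ P ≤ testExp n ψ Q :=
  ⟨mixP h0.le h1 P, memPstr_mixP h0 h1 P hP,
    testExp_mixP_ge h0.le h1 n ψ hψ_meas hψ_range P⟩

end NFL7
/-- For `K` any one of the overlap classes `P_SI^ov`, `P_SI^(r)` (`r > 0`) or
`P_SI^str`, and any measurable randomized test `ψ_n : D^n → [0,1]` applied to `n` i.i.d.
full-data observations, `sup_{P ∈ K} E_P[ψ_n] = sup_{P ∈ P_SI} E_P[ψ_n]`. -/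
theorem sup_power_overlap_eq_sup_power_SI {p : ℕ}
    (K : Set (ProbabilityMeasure (FullData p)))
    (hK : K = {P | memPov P} ∨
      (∃ r : ℝ, 0 < r ∧ K = {P | memPr r P}) ∨ K = {P | memPstr P})
    (n : ℕ) (ψ : (Fin n → FullData p) → ℝ)
    (hψ_meas : Measurable ψ) (hψ_range : ∀ x, ψ x ∈ Set.Icc (0 : ℝ) 1) :
    (⨆ P : K, testExp n ψ (P : ProbabilityMeasure (FullData p))) =
      ⨆ P : {P : ProbabilityMeasure (FullData p) // memPSI P}, testExp n ψ P.1 := by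
  have hsub : ∀ P : ProbabilityMeasure (FullData p), P ∈ K → memPSI P := by
    rcases hK with h | ⟨r, hr, h⟩ | h <;> subst h <;> intro P hP <;> exact hP.1
  have hstr : ∀ P : ProbabilityMeasure (FullData p), memPstr P → P ∈ K := by
    rcases hK with h | ⟨r, hr, h⟩ | h <;> subst h <;> intro P hP
    · exact NFL7.memPov_of_memPstr P hP
    · exact NFL7.memPr_of_memPstr r hr P hP
    · exact hP
  by_cases hne : Nonempty {P : ProbabilityMeasure (FullData p) // memPSI P}
  · obtain ⟨⟨P0, hP0⟩⟩ := hne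
    obtain ⟨Q0, hQ0str, -⟩ := NFL7.approx n ψ hψ_meas hψ_range P0 hP0 one_pos le_rfl
    have hKne : Nonempty ↥K := ⟨⟨Q0, hstr Q0 hQ0str⟩⟩
    have bddK : BddAbove (Set.range fun P : ↥K =>
        testExp n ψ (P : ProbabilityMeasure (FullData p))) := by
      refine ⟨1, ?_⟩
      rintro x ⟨P, rfl⟩
      exact NFL7.testExp_le_one n ψ hψ_meas hψ_range _
    have bddS : BddAbove (Set.range fun P : {P : ProbabilityMeasure (FullData p) // memPSI P} =>
        testExp n ψ P.1) := by
      refine ⟨1, ?_⟩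
      rintro x ⟨P, rfl⟩
      exact NFL7.testExp_le_one n ψ hψ_meas hψ_range _
    haveI : Nonempty {P : ProbabilityMeasure (FullData p) // memPSI P} := ⟨⟨P0, hP0⟩⟩
    refine le_antisymm ?_ ?_
    · refine ciSup_le fun P => ?_
      exact le_ciSup_of_le bddS ⟨(P : ProbabilityMeasure (FullData p)), hsub _ P.2⟩ le_rfl
    · refine ciSup_le fun P => ?_
      have key : ∀ k : ℕ, (1 - 1/((k:ℝ)+2)) ^ n * testExp n ψ P.1
          ≤ ⨆ Q : ↥K, testExp n ψ (Q : ProbabilityMeasure (FullData p)) := by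
        intro k
        have hk2 : (0:ℝ) < (k:ℝ) + 2 := by positivity
        have hδ0 : 0 < 1/((k:ℝ)+2) := by positivity
        have hδ1 : 1/((k:ℝ)+2) ≤ 1 := by
          rw [div_le_one hk2]
          linarith [Nat.cast_nonneg (α := ℝ) k]
        obtain ⟨Q, hQstr, hQle⟩ := NFL7.approx n ψ hψ_meas hψ_range P.1 P.2 hδ0 hδ1
        exact hQle.trans (le_ciSup_of_le bddK (⟨Q, hstr Q hQstr⟩ : ↥K) le_rfl)
      have hseq : Filter.Tendsto (fun k : ℕ => 1/((k:ℝ)+2)) Filter.atTop (nhds 0) := by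
        have h2 : Filter.Tendsto (fun k : ℕ => ((k:ℝ)+2)) Filter.atTop Filter.atTop :=
          Filter.tendsto_atTop_add_const_right _ 2 tendsto_natCast_atTop_atTop
        simpa [one_div, Pi.inv_def] using h2.inv_tendsto_atTop
      have htend : Filter.Tendsto (fun k : ℕ => (1 - 1/((k:ℝ)+2)) ^ n * testExp n ψ P.1)
          Filter.atTop (nhds (testExp n ψ P.1)) := by
        have := ((tendsto_const_nhds (x := (1:ℝ)) (f := Filter.atTop (α := ℕ))).sub hseq).pow n
        have := this.mul_const (testExp n ψ P.1)
        simpa using this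
      exact le_of_tendsto' htend key
  · haveI hS : IsEmpty {P : ProbabilityMeasure (FullData p) // memPSI P} :=
      not_nonempty_iff.mp hne
    haveI hKe : IsEmpty ↥K := ⟨fun P => hS.false ⟨(P : ProbabilityMeasure (FullData p)), hsub _ P.2⟩⟩
    rw [iSup_of_empty', iSup_of_empty']

end
end

section
/- Let (X, Y(1), Y(0), T) be random elements on a probability space with T ∈ {0,1}, and suppose (Y(1), Y(0)) is conditionally independent of T given X. Let ε ∈ (0,1), let A ~ Bernoulli(ε) and B ~ Bernoulli(1/2) be independent of each other and of (X, Y(1), Y(0), T), and define T_ε := (1 − A)T + A·B. Then (Y(1), Y(0)) is conditionally independent of T_ε given X. -/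
/-!
STATEMENT 7: Mixing the treatment indicator with an independent Bernoulli coin preserves
conditional independence of the potential outcomes and the treatment given the covariates.
-/

open MeasureTheory ProbabilityTheory

noncomputable section

lemma aux_pullout {Ω : Type*} {m mb mab : MeasurableSpace Ω} {mΩ : MeasurableSpace Ω}
    (P : Measure Ω) [IsProbabilityMeasure P] (hm : m ≤ mb) (hmb : mb ≤ mΩ) (hmab : mab ≤ mΩ)
    (hindep : Indep mab mb P)
    {F E : Set Ω} (hF : MeasurableSet[mab] F) (hE : MeasurableSet[mb] E) :
    (P⟦F ∩ E | m⟧) =ᵐ[P] fun ω => (P F).toReal * (P⟦E | m⟧) ω := by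
  have hFm : MeasurableSet[mΩ] F := hmab _ hF
  have hEm : MeasurableSet[mΩ] E := hmb _ hE
  have hintF : Integrable (F.indicator fun _ => (1:ℝ)) P :=
    (integrable_const (1:ℝ)).indicator hFm
  have hprod : (F ∩ E).indicator (fun _ => (1:ℝ))
      = (E.indicator fun _ => (1:ℝ)) * (F.indicator fun _ => (1:ℝ)) := by
    funext ω
    by_cases hωF : ω ∈ F <;> by_cases hωE : ω ∈ E <;>
      simp [Set.indicator_apply, Set.mem_inter_iff, hωF, hωE]
  have hintFE : Integrable ((E.indicator fun _ => (1:ℝ)) * (F.indicator fun _ => (1:ℝ))) P := by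
    rw [← hprod]; exact (integrable_const (1:ℝ)).indicator (hFm.inter hEm)
  have hFconst : P[F.indicator (fun _ => (1:ℝ)) | mb] =ᵐ[P] fun _ => (P F).toReal := by
    have h := condExp_indep_eq hmab hmb
      (f := F.indicator fun _ => (1:ℝ))
      (stronglyMeasurable_const.indicator hF) hindep
    refine h.trans ?_
    filter_upwards with ω
    rw [integral_indicator hFm, setIntegral_const, smul_eq_mul, mul_one, measureReal_def]
  have hpull : P[(E.indicator fun _ => (1:ℝ)) * (F.indicator fun _ => (1:ℝ)) | mb]
      =ᵐ[P] fun ω => (E.indicator fun _ => (1:ℝ)) ω * (P F).toReal := by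
    refine (condExp_mul_of_stronglyMeasurable_left (stronglyMeasurable_const.indicator hE)
      hintFE hintF).trans ?_
    filter_upwards [hFconst] with ω hω
    simp only [Pi.mul_apply, hω]
  have tower : (P⟦F ∩ E | m⟧) =ᵐ[P]
      P[(fun ω => (E.indicator fun _ => (1:ℝ)) ω * (P F).toReal) | m] := by
    have h1 : (P⟦F ∩ E | m⟧)
        =ᵐ[P] P[ P[(F ∩ E).indicator (fun _ => (1:ℝ)) | mb] | m] :=
      (condExp_condExp_of_le hm hmb).symm
    refine h1.trans (condExp_congr_ae ?_)
    rw [hprod]; exact hpull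
  refine tower.trans ?_
  have hsm : (fun ω => (E.indicator fun _ => (1:ℝ)) ω * (P F).toReal)
      = (P F).toReal • (E.indicator fun _ => (1:ℝ)) := by
    funext ω; simp [mul_comm]
  rw [hsm]
  refine (condExp_smul ((P F).toReal) (E.indicator fun _ => (1:ℝ)) m).trans ?_
  filter_upwards with ω
  simp

lemma aux_int_one {Ω : Type*} {mΩ : MeasurableSpace Ω} (P : Measure Ω) [IsFiniteMeasure P]
    {S : Set Ω} (hS : MeasurableSet S) : Integrable (S.indicator fun _ => (1:ℝ)) P :=
  (integrable_const 1).indicator hS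

/-- Let `(X, Y(1), Y(0), T)` be random elements with `T ∈ {0,1}` and
`(Y(1), Y(0)) ⫫ T | X`. Let `ε ∈ (0,1)`, `A ~ Bernoulli(ε)`, `B ~ Bernoulli(1/2)` be
independent of each other and of `(X, Y(1), Y(0), T)`, and `T_ε := (1 − A)·T + A·B`
(i.e. `T_ε = B` if `A = 1` and `T_ε = T` otherwise). Then `(Y(1), Y(0)) ⫫ T_ε | X`. -/
theorem condIndep_of_mixed_treatment
    {Ω : Type*} {mΩ : MeasurableSpace Ω} [StandardBorelSpace Ω]
    (P : Measure Ω) [IsProbabilityMeasure P] {p : ℕ}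
    (X : Ω → Fin p → ℝ) (Y1 Y0 : Ω → ℝ) (T A B : Ω → Bool)
    (hX : Measurable X) (hY1 : Measurable Y1) (hY0 : Measurable Y0)
    (hT : Measurable T) (hA : Measurable A) (hB : Measurable B)
    (ε : ℝ) (hε : ε ∈ Set.Ioo (0 : ℝ) 1)
    (hAlaw : P {ω | A ω = true} = ENNReal.ofReal ε)
    (hBlaw : P {ω | B ω = true} = 1 / 2)
    (hAB : IndepFun A B P)
    (hAB_indep : IndepFun (fun ω => (A ω, B ω))
      (fun ω => (X ω, Y1 ω, Y0 ω, T ω)) P)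
    (hCI : CondIndepFun (MeasurableSpace.comap X inferInstance) hX.comap_le
      (fun ω => (Y1 ω, Y0 ω)) T P) :
    CondIndepFun (MeasurableSpace.comap X inferInstance) hX.comap_le
      (fun ω => (Y1 ω, Y0 ω)) (fun ω => if A ω then B ω else T ω) P := by
  have hY : Measurable (fun ω => (Y1 ω, Y0 ω)) := hY1.prodMk hY0
  have hg : Measurable (fun ω => if A ω then B ω else T ω) :=
    Measurable.ite (hA (measurableSet_singleton true)) hB hT
  have hW : Measurable (fun ω => (X ω, Y1 ω, Y0 ω, T ω)) :=
    hX.prodMk (hY1.prodMk (hY0.prodMk hT))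
  have hm : MeasurableSpace.comap X inferInstance ≤ mΩ := hX.comap_le
  have hmb : MeasurableSpace.comap (fun ω => (X ω, Y1 ω, Y0 ω, T ω)) inferInstance ≤ mΩ :=
    hW.comap_le
  have hmab : MeasurableSpace.comap (fun ω => (A ω, B ω)) inferInstance ≤ mΩ :=
    (hA.prodMk hB).comap_le
  have hm_mb : MeasurableSpace.comap X inferInstance
      ≤ MeasurableSpace.comap (fun ω => (X ω, Y1 ω, Y0 ω, T ω)) inferInstance := by
    rw [show X = (fun q : (Fin p → ℝ) × ℝ × ℝ × Bool => q.1)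
        ∘ (fun ω => (X ω, Y1 ω, Y0 ω, T ω)) from rfl,
      ← MeasurableSpace.comap_comp]
    exact MeasurableSpace.comap_mono measurable_fst.comap_le
  rw [condIndepFun_iff_condExp_inter_preimage_eq_mul hY hg]
  rw [condIndepFun_iff_condExp_inter_preimage_eq_mul hY hT] at hCI
  set m := MeasurableSpace.comap X inferInstance with hm_def
  set mb := MeasurableSpace.comap (fun ω => (X ω, Y1 ω, Y0 ω, T ω)) inferInstance with hmb_def
  set mab := MeasurableSpace.comap (fun ω => (A ω, B ω)) inferInstance with hmab_def
  have hindep : Indep mab mb P := hAB_indep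
  intro s t hs ht
  set E := (fun ω => (Y1 ω, Y0 ω)) ⁻¹' s with hE_def
  set Tt := T ⁻¹' t with hTt_def
  have hE_mb : MeasurableSet[mb] E :=
    ⟨(fun q : (Fin p → ℝ) × ℝ × ℝ × Bool => (q.2.1, q.2.2.1)) ⁻¹' s,
      ((measurable_fst.comp measurable_snd).prodMk
        (measurable_fst.comp (measurable_snd.comp measurable_snd))) hs, rfl⟩
  have hTt_mb : MeasurableSet[mb] Tt :=
    ⟨(fun q : (Fin p → ℝ) × ℝ × ℝ × Bool => q.2.2.2) ⁻¹' t,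
      (measurable_snd.comp (measurable_snd.comp measurable_snd)) ht, rfl⟩
  set F1 := A ⁻¹' ({true} : Set Bool) ∩ B ⁻¹' t with hF1_def
  set F0 := A ⁻¹' ({false} : Set Bool) with hF0_def
  have hF1_mab : MeasurableSet[mab] F1 :=
    ⟨{true} ×ˢ t, (measurableSet_singleton true).prod ht, by
      rw [Set.mk_preimage_prod]⟩
  have hF0_mab : MeasurableSet[mab] F0 :=
    ⟨{false} ×ˢ Set.univ, (measurableSet_singleton false).prod MeasurableSet.univ, by
      rw [Set.mk_preimage_prod, Set.preimage_univ, Set.inter_univ]⟩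
  have hdecE : E ∩ (fun ω => if A ω then B ω else T ω) ⁻¹' t
      = (F1 ∩ E) ∪ (F0 ∩ (E ∩ Tt)) := by
    ext ω
    cases hAω : A ω <;>
      simp [hF1_def, hF0_def, hE_def, hTt_def, Set.mem_preimage, hAω, and_comm, and_assoc]
  have hdecT : (fun ω => if A ω then B ω else T ω) ⁻¹' t
      = (F1 ∩ Set.univ) ∪ (F0 ∩ Tt) := by
    ext ω
    cases hAω : A ω <;>
      simp [hF1_def, hF0_def, hTt_def, Set.mem_preimage, hAω]
  set c1 := (P F1).toReal with hc1
  set c0 := (P F0).toReal with hc0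
  have hdisj : ∀ (S1 S2 : Set Ω), Disjoint (F1 ∩ S1) (F0 ∩ S2) := by
    intro S1 S2
    refine Set.disjoint_left.2 fun ω hω1 hω2 => ?_
    have h1 : A ω = true := hω1.1.1
    have h0 : A ω = false := hω2.1
    simp [h1] at h0
  have hadd : ∀ (S1 S2 : Set Ω), MeasurableSet[mΩ] S1 → MeasurableSet[mΩ] S2 →
      (P⟦(F1 ∩ S1) ∪ (F0 ∩ S2) | m⟧)
        =ᵐ[P] fun ω => (P⟦F1 ∩ S1 | m⟧) ω + (P⟦F0 ∩ S2 | m⟧) ω := by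
    intro S1 S2 hS1 hS2
    have h1 : MeasurableSet[mΩ] (F1 ∩ S1) := ((hmab _ hF1_mab).inter hS1)
    have h2 : MeasurableSet[mΩ] (F0 ∩ S2) := ((hmab _ hF0_mab).inter hS2)
    have hind : ((F1 ∩ S1) ∪ (F0 ∩ S2)).indicator (fun _ => (1:ℝ))
        = (F1 ∩ S1).indicator (fun _ => (1:ℝ)) + (F0 ∩ S2).indicator (fun _ => (1:ℝ)) :=
      Set.indicator_union_of_disjoint (hdisj S1 S2) _
    rw [hind]
    exact condExp_add (aux_int_one P h1) (aux_int_one P h2) m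
  have hP1E : (P⟦F1 ∩ E | m⟧) =ᵐ[P] fun ω => c1 * (P⟦E | m⟧) ω :=
    aux_pullout P hm_mb hmb hmab hindep hF1_mab hE_mb
  have hP0 : (P⟦F0 ∩ (E ∩ Tt) | m⟧) =ᵐ[P] fun ω => c0 * (P⟦E ∩ Tt | m⟧) ω :=
    aux_pullout P hm_mb hmb hmab hindep hF0_mab (hE_mb.inter hTt_mb)
  have hP1u : (P⟦F1 ∩ Set.univ | m⟧) =ᵐ[P] fun ω => c1 * (P⟦(Set.univ : Set Ω) | m⟧) ω :=
    aux_pullout P hm_mb hmb hmab hindep hF1_mab MeasurableSet.univ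
  have hP0T : (P⟦F0 ∩ Tt | m⟧) =ᵐ[P] fun ω => c0 * (P⟦Tt | m⟧) ω :=
    aux_pullout P hm_mb hmb hmab hindep hF0_mab hTt_mb
  have huniv : (P⟦(Set.univ : Set Ω) | m⟧) =ᵐ[P] fun _ => (1:ℝ) := by
    have h1 : (Set.univ : Set Ω).indicator (fun _ => (1:ℝ)) = fun _ => (1:ℝ) := by
      funext ω; simp
    rw [h1, condExp_const hm (1:ℝ)]
  have hCIst := hCI s t hs ht
  have hLHS : (P⟦E ∩ (fun ω => if A ω then B ω else T ω) ⁻¹' t | m⟧)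
      =ᵐ[P] fun ω => c1 * (P⟦E | m⟧) ω + c0 * ((P⟦E | m⟧) ω * (P⟦Tt | m⟧) ω) := by
    rw [hdecE]
    refine (hadd E (E ∩ Tt) (hmb _ hE_mb) (hmb _ (hE_mb.inter hTt_mb))).trans ?_
    filter_upwards [hP1E, hP0, hCIst] with ω h1 h0 hci
    rw [h1, h0, hci]
  have hRHS : (P⟦(fun ω => if A ω then B ω else T ω) ⁻¹' t | m⟧)
      =ᵐ[P] fun ω => c1 + c0 * (P⟦Tt | m⟧) ω := by
    rw [hdecT]
    refine (hadd Set.univ Tt MeasurableSet.univ (hmb _ hTt_mb)).trans ?_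
    filter_upwards [hP1u, hP0T, huniv] with ω h1 h0 hu
    rw [h1, h0, hu, mul_one]
  refine hLHS.trans ?_
  filter_upwards [hRHS] with ω hω
  rw [hω]
  ring


end
end

section
/- Let X be a random element of ℝ^p on a probability space, and let C be a map from ℝ^p to Borel subsets of ℝ such that (x, y) ↦ 1{y ∈ C(x)} is jointly measurable. If there exists α ∈ [0,1) such that P(y ∈ C(X)) ≥ 1 − α for every y ∈ ℝ, then E[length(C(X))] = ∞; indeed E[length(C(X))] = ∫_ℝ P(y ∈ C(X)) dy. -/
open MeasureTheory

/-- Robbins' formula for the expected measure of a random set. -/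
theorem lintegral_measure_eq_lintegral_measure_setOf_mem {Ω β : Type*} [MeasurableSpace Ω]
    [MeasurableSpace β] (P : Measure Ω) (ν : Measure β) [SFinite P] [SFinite ν]
    {K : Ω → Set β} (hK : MeasurableSet {q : Ω × β | q.2 ∈ K q.1}) :
    ∫⁻ ω, ν (K ω) ∂P = ∫⁻ y, P {ω | y ∈ K ω} ∂ν :=
  (Measure.prod_apply hK).symm.trans (Measure.prod_apply_symm hK)

theorem lintegral_eq_top_of_forall_const_le {α : Type*} [MeasurableSpace α] {μ : Measure α}
    (hμ : μ Set.univ = ⊤) {c : ENNReal} (hc : c ≠ 0) {f : α → ENNReal} (hf : ∀ x, c ≤ f x) :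
    ∫⁻ x, f x ∂μ = ⊤ :=
  top_unique <| calc
    ⊤ = ∫⁻ _, c ∂μ := by rw [lintegral_const, hμ, ENNReal.mul_top hc]
    _ ≤ ∫⁻ x, f x ∂μ := lintegral_mono hf

/-- Let `X` be a random element of `ℝ^p` and `C` a set-valued map with
jointly measurable indicator. If there is `α ∈ [0,1)` with `P(y ∈ C(X)) ≥ 1 − α` for every
`y ∈ ℝ`, then `E[length(C(X))] = ∞`; indeed
`E[length(C(X))] = ∫_ℝ P(y ∈ C(X)) dy`. -/
theorem infinite_expected_length_of_uniform_coverage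
    {Ω : Type*} [MeasurableSpace Ω]
    (P : Measure Ω) [IsProbabilityMeasure P] {p : ℕ}
    (X : Ω → Fin p → ℝ) (hX : Measurable X)
    (C : (Fin p → ℝ) → Set ℝ)
    (hC : MeasurableSet {q : (Fin p → ℝ) × ℝ | q.2 ∈ C q.1})
    (α : ℝ) (hα : α ∈ Set.Ico (0 : ℝ) 1)
    (hcov : ∀ y : ℝ, ENNReal.ofReal (1 - α) ≤ P {ω | y ∈ C (X ω)}) :
    ∫⁻ ω, volume (C (X ω)) ∂P = ⊤ ∧
      ∫⁻ ω, volume (C (X ω)) ∂P = ∫⁻ y, P {ω | y ∈ C (X ω)} ∂(volume : Measure ℝ) := by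
  have hgraph : MeasurableSet {q : Ω × ℝ | q.2 ∈ C (X q.1)} :=
    hC.preimage ((hX.comp measurable_fst).prodMk measurable_snd)
  have robbins :=
    lintegral_measure_eq_lintegral_measure_setOf_mem (K := fun ω ↦ C (X ω)) P volume hgraph
  have hcov_pos : ENNReal.ofReal (1 - α) ≠ 0 := by
    rw [ENNReal.ofReal_ne_zero_iff]
    linarith [hα.2]
  exact ⟨robbins ▸ lintegral_eq_top_of_forall_const_le Real.volume_univ hcov_pos hcov, robbins⟩
end

section
/- For each n ≥ 1, let X_n be a random element of ℝ^p on a probability space and C_n a map from ℝ^p to Borel subsets of ℝ with (x, y) ↦ 1{y ∈ C_n(x)} jointly measurable. If there exists α ∈ [0,1) such that liminf_{n→∞} P(y ∈ C_n(X_n)) ≥ 1 − α for every y ∈ ℝ, then lim_{n→∞} E[length(C_n(X_n))] = ∞. -/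
open MeasureTheory Filter

/-!
By Tonelli, the expected length `∫ volume (C n (X n ω)) dP` equals `∫ P(y ∈ C n (X n)) dy`.
Fatou's lemma bounds the liminf of the latter below by `∫ liminf_n P(y ∈ C n (X n)) dy`,
which is at least `(1 - α) · volume ℝ = ∞`.
-/

section

variable {α β : Type*} [MeasurableSpace α] [MeasurableSpace β]

theorem lintegral_measure_slice_comm {μ : Measure α} {ν : Measure β} [SFinite μ] [SFinite ν]
    {s : Set (α × β)} (hs : MeasurableSet s) :
    ∫⁻ a, ν {b | (a, b) ∈ s} ∂μ = ∫⁻ b, μ {a | (a, b) ∈ s} ∂ν :=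
  (Measure.prod_apply hs).symm.trans (Measure.prod_apply_symm hs)

theorem tendsto_lintegral_top_of_le_liminf {ν : Measure β} {f : ℕ → β → ENNReal}
    (hf : ∀ n, Measurable (f n)) {c : ENNReal} (hc : c ≠ 0) (hν : ν Set.univ = ⊤)
    (hcf : ∀ y, c ≤ liminf (fun n => f n y) atTop) :
    Tendsto (fun n => ∫⁻ y, f n y ∂ν) atTop (nhds ⊤) := by
  have hliminf : ⊤ ≤ liminf (fun n => ∫⁻ y, f n y ∂ν) atTop :=
    calc ⊤ = ∫⁻ _, c ∂ν := by rw [lintegral_const, hν, ENNReal.mul_top hc]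
      _ ≤ ∫⁻ y, liminf (fun n => f n y) atTop ∂ν := lintegral_mono hcf
      _ ≤ liminf (fun n => ∫⁻ y, f n y ∂ν) atTop := lintegral_liminf_le hf
  exact tendsto_of_le_liminf_of_limsup_le hliminf le_top

end

/-- For each `n`, let `X_n` be a random element of `ℝ^p` on a probability
space `(Ω_n, P_n)` and `C_n` a set-valued map with jointly measurable indicator. If there is
`α ∈ [0,1)` such that `liminf_{n→∞} P(y ∈ C_n(X_n)) ≥ 1 − α` for every `y ∈ ℝ`, then
`lim_{n→∞} E[length(C_n(X_n))] = ∞`. -/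
theorem expected_length_tendsto_top_of_asymptotic_coverage
    {p : ℕ} (Ω : ℕ → Type*) [∀ n, MeasurableSpace (Ω n)]
    (P : (n : ℕ) → Measure (Ω n)) [∀ n, IsProbabilityMeasure (P n)]
    (X : (n : ℕ) → Ω n → Fin p → ℝ) (hX : ∀ n, Measurable (X n))
    (C : ℕ → (Fin p → ℝ) → Set ℝ)
    (hC : ∀ n, MeasurableSet {q : (Fin p → ℝ) × ℝ | q.2 ∈ C n q.1})
    (α : ℝ) (hα : α ∈ Set.Ico (0 : ℝ) 1)
    (hcov : ∀ y : ℝ, ENNReal.ofReal (1 - α) ≤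
      liminf (fun n => P n {ω | y ∈ C n (X n ω)}) atTop) :
    Tendsto (fun n => ∫⁻ ω, volume (C n (X n ω)) ∂(P n)) atTop (nhds ⊤) := by
  have hS : ∀ n, MeasurableSet {q : Ω n × ℝ | q.2 ∈ C n (X n q.1)} := fun n =>
    (hC n).preimage ((hX n).prodMap measurable_id)
  have hswap : (fun n => ∫⁻ ω, volume (C n (X n ω)) ∂(P n)) =
      fun n => ∫⁻ y, P n {ω | y ∈ C n (X n ω)} :=
    funext fun n => lintegral_measure_slice_comm (hS n)
  rw [hswap]
  exact tendsto_lintegral_top_of_le_liminf (fun n => measurable_measure_prodMk_right (hS n))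
    (ENNReal.ofReal_pos.2 (sub_pos.2 hα.2)).ne' Real.volume_univ hcov
end
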